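/- Let N ≥ 3 and consider ℝ^{2N} with coordinates (q₁,…,q_N, p₁,…,p_N) and the canonical Poisson bracket {f,h} = Σ_{i=1}^{N} (∂f/∂q_i ∂h/∂p_i - ∂f/∂p_i ∂h/∂q_i). Define the functions S₀ = e^{-2q₁}, S_N = e^{2q_N}, and S_n = exp(q_n - q_{n+1} + (-1)ⁿ (p_n - p_{n+1})/2) for 1 ≤ n ≤ N-1. Then: (i) {S_n, S_{n+1}} = (-1)ⁿ S_n S_{n+1} for every 0 ≤ n ≤ N-1; (ii) {S_n, e^{p_n}} = S_n e^{p_n} for every 1 ≤ n ≤ N-1; (iii) {e^{p_{n+1}}, S_n} = e^{p_{n+1}} S_n for every 1 ≤ n ≤ N-1. -/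

import Mathlib

/-!
Every function in the statement is a constant multiple of the exponential of an affine function
of `(q, p)`, so each partial derivative is the corresponding slope times the function itself.
Hence the bracket of two such functions is the canonical pairing of their slope vectors times
their product, and each relation reduces to a finite computation with the slopes; for
`{S_n, S_{n+1}}` only the coordinate `n + 1` shared by the two loops contributes.
-/

open Real

/-- The canonical Poisson bracket of two functions on `ℝ^{2N}`
(coordinates `q₁,…,q_N,p₁,…,p_N`, indexed here by `1,…,N ⊂ ℕ`):
`{f,h} = Σ_{i=1}^N (∂f/∂q_i ∂h/∂p_i - ∂f/∂p_i ∂h/∂q_i)`. -/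
noncomputable def poissonBracketN (N : ℕ)
    (f h : (ℕ → ℝ) → (ℕ → ℝ) → ℝ) (q p : ℕ → ℝ) : ℝ :=
  ∑ i ∈ Finset.Icc 1 N,
    (deriv (fun t => f (Function.update q i t) p) (q i) *
        deriv (fun t => h q (Function.update p i t)) (p i)
      - deriv (fun t => f q (Function.update p i t)) (p i) *
        deriv (fun t => h (Function.update q i t) p) (q i))

/-- The square-loop weights of the `D_N` dimer: `S₀ = e^{-2q₁}`, `S_N = e^{2q_N}`,
`S_n = exp(q_n - q_{n+1} + (-1)ⁿ(p_n - p_{n+1})/2)` for `1 ≤ n ≤ N-1`. -/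
noncomputable def squareLoop (N n : ℕ) (q p : ℕ → ℝ) : ℝ :=
  if n = 0 then Real.exp (-2 * q 1)
  else if n = N then Real.exp (2 * q N)
  else Real.exp (q n - q (n + 1) + (-1 : ℝ) ^ n * (p n - p (n + 1)) / 2)

open Function Finset

/-- Models `f = c · exp (∑ᵢ (α i * q i + β i * p i))`, stated through the effect of moving one coordinate, so
that no infinite sum over the index set `ℕ` is needed. -/
def IsExpAffine (f : (ℕ → ℝ) → (ℕ → ℝ) → ℝ) (α β : ℕ → ℝ) : Prop :=
  ∀ q p i t, f (update q i t) p = exp (α i * (t - q i)) * f q p ∧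
    f q (update p i t) = exp (β i * (t - p i)) * f q p

theorem deriv_exp_mul_sub_mul (a x c : ℝ) :
    deriv (fun t => exp (a * (t - x)) * c) x = a * c := by
  have h : HasDerivAt (fun t => a * (t - x)) a x := by
    simpa using ((hasDerivAt_id x).sub_const x).const_mul a
  simpa using (h.exp.mul_const c).deriv

def canonicalPairing (N : ℕ) (α β α' β' : ℕ → ℝ) : ℝ :=
  ∑ i ∈ Icc 1 N, (α i * β' i - β i * α' i)

theorem canonicalPairing_swap (N : ℕ) (α β α' β' : ℕ → ℝ) :
    canonicalPairing N α β α' β' = -canonicalPairing N α' β' α β := by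
  simp only [canonicalPairing, ← sum_neg_distrib]
  exact sum_congr rfl fun i _ => by ring

theorem canonicalPairing_zero_single (N : ℕ) {j : ℕ} (hj : j ∈ Icc 1 N) (α β : ℕ → ℝ) :
    canonicalPairing N α β 0 (Pi.single j 1) = α j := by
  rw [canonicalPairing, sum_eq_single_of_mem j hj fun i _ hi => by simp [hi]]
  simp

namespace IsExpAffine

variable {f g : (ℕ → ℝ) → (ℕ → ℝ) → ℝ} {α β α' β' : ℕ → ℝ}

theorem deriv_q (hf : IsExpAffine f α β) (q p : ℕ → ℝ) (i : ℕ) :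
    deriv (fun t => f (update q i t) p) (q i) = α i * f q p := by
  simp_rw [fun t => (hf q p i t).1]
  exact deriv_exp_mul_sub_mul _ _ _

theorem deriv_p (hf : IsExpAffine f α β) (q p : ℕ → ℝ) (i : ℕ) :
    deriv (fun t => f q (update p i t)) (p i) = β i * f q p := by
  simp_rw [fun t => (hf q p i t).2]
  exact deriv_exp_mul_sub_mul _ _ _

theorem poissonBracketN_eq (hf : IsExpAffine f α β) (hg : IsExpAffine g α' β')
    (N : ℕ) (q p : ℕ → ℝ) :
    poissonBracketN N f g q p
      = canonicalPairing N α β α' β' * (f q p * g q p) := by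
  rw [poissonBracketN, canonicalPairing, sum_mul]
  refine sum_congr rfl fun i _ => ?_
  rw [hf.deriv_q, hf.deriv_p, hg.deriv_q, hg.deriv_p]
  ring

end IsExpAffine

theorem isExpAffine_exp_apply (n : ℕ) :
    IsExpAffine (fun _ p => exp (p n)) 0 (Pi.single n 1) := by
  intro q p i t
  refine ⟨by simp, ?_⟩
  by_cases h : n = i
  · subst h
    simp [← exp_add]
  · simp [h, Ne.symm h]

noncomputable def squareLoopSlopeQ (N n i : ℕ) : ℝ :=
  if n = 0 then (if i = 1 then -2 else 0)
  else if n = N then (if i = N then 2 else 0)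
  else (if i = n then 1 else 0) - (if i = n + 1 then 1 else 0)

noncomputable def squareLoopSlopeP (N n i : ℕ) : ℝ :=
  if n = 0 then 0 else if n = N then 0 else (-1) ^ n / 2 * squareLoopSlopeQ N n i

theorem squareLoopSlopeQ_self {N n : ℕ} (h₀ : n ≠ 0) (hN : n ≠ N) :
    squareLoopSlopeQ N n n = 1 := by
  simp [squareLoopSlopeQ, h₀, hN]

theorem squareLoopSlopeQ_succ {N n : ℕ} (h₀ : n ≠ 0) (hN : n ≠ N) :
    squareLoopSlopeQ N n (n + 1) = -1 := by
  simp [squareLoopSlopeQ, h₀, hN]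

theorem isExpAffine_squareLoop (N n : ℕ) :
    IsExpAffine (squareLoop N n) (squareLoopSlopeQ N n) (squareLoopSlopeP N n) := by
  intro q p i t
  simp only [squareLoop, squareLoopSlopeP, squareLoopSlopeQ, update_apply]
  constructor <;> split_ifs <;> first | omega | (rw [← exp_add]; congr 1; subst_vars; ring)

theorem canonicalPairing_squareLoopSlope_succ {N n : ℕ} (hN : 2 ≤ N) (hn : n < N) :
    canonicalPairing N (squareLoopSlopeQ N n) (squareLoopSlopeP N n)
      (squareLoopSlopeQ N (n + 1)) (squareLoopSlopeP N (n + 1)) = (-1) ^ n := by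
  rw [canonicalPairing, sum_eq_single_of_mem (n + 1) (by simp; omega) ?_]
  · unfold squareLoopSlopeP squareLoopSlopeQ
    split_ifs <;> first | (exfalso; omega) | (subst_vars; ring)
  · intro i hi hne
    simp only [mem_Icc] at hi
    unfold squareLoopSlopeP squareLoopSlopeQ
    split_ifs <;> first | (exfalso; omega) | ring

/-- Poisson commutation relations of the square loops of the `D_N` dimer:
(i) `{S_n, S_{n+1}} = (-1)ⁿ S_n S_{n+1}` for `0 ≤ n ≤ N-1`;
(ii) `{S_n, e^{p_n}} = S_n e^{p_n}` for `1 ≤ n ≤ N-1`;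
(iii) `{e^{p_{n+1}}, S_n} = e^{p_{n+1}} S_n` for `1 ≤ n ≤ N-1`. -/
theorem squareLoop_poisson_relations (N : ℕ) (hN : 3 ≤ N) (q p : ℕ → ℝ) :
    (∀ n : ℕ, n ≤ N - 1 →
      poissonBracketN N (squareLoop N n) (squareLoop N (n + 1)) q p
        = (-1 : ℝ) ^ n * (squareLoop N n q p * squareLoop N (n + 1) q p)) ∧
    (∀ n : ℕ, 1 ≤ n → n ≤ N - 1 →
      poissonBracketN N (squareLoop N n) (fun _ p' => Real.exp (p' n)) q p
        = squareLoop N n q p * Real.exp (p n)) ∧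
    (∀ n : ℕ, 1 ≤ n → n ≤ N - 1 →
      poissonBracketN N (fun _ p' => Real.exp (p' (n + 1))) (squareLoop N n) q p
        = Real.exp (p (n + 1)) * squareLoop N n q p) := by
  have hS := isExpAffine_squareLoop N
  refine ⟨fun n hn => ?_, fun n hn₁ hn₂ => ?_, fun n hn₁ hn₂ => ?_⟩
  · rw [(hS n).poissonBracketN_eq (hS (n + 1)),
      canonicalPairing_squareLoopSlope_succ (by omega) (by omega)]
  · rw [(hS n).poissonBracketN_eq (isExpAffine_exp_apply n),
      canonicalPairing_zero_single N (by simp; omega),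
      squareLoopSlopeQ_self (by omega) (by omega), one_mul]
  · rw [(isExpAffine_exp_apply (n + 1)).poissonBracketN_eq (hS n), canonicalPairing_swap,
      canonicalPairing_zero_single N (by simp; omega),
      squareLoopSlopeQ_succ (by omega) (by omega), neg_neg, one_mul]
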